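/- arXiv:2303.10658 — 3 statements merged into one kernel-verified Lean document; each statement's English description precedes it below -/
import Mathlib

section
/- Let {F^{ij}} and {G^{ij}} be two compatible families of fundamental matrices indexed by the same set of pairs on indices 1,…,n. Then {F^{ij}} and {G^{ij}} are equivalent under the fundamental action — i.e., there exist H₁,…,Hₙ ∈ GL₃(ℝ) and nonzero scalars λ_{ij} with G^{ij} = λ_{ij} Hᵢᵀ F^{ij} Hⱼ for all indexing pairs — if and only if there exist a solution {Pᵢ} of {F^{ij}}, a solution {Qᵢ} of {G^{ij}}, and H ∈ GL₄(ℝ) such that ker Qᵢ = H⁻¹ (ker Pᵢ) for every i (i.e., the camera centers of the two solutions are equivalent under a projective transformation). -/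
open Matrix

/-- The 6×6 matrix whose first three rows form the block `[P₁ | x | 0]` and whose last
three rows form the block `[P₂ | 0 | y]`. -/
noncomputable def bigMat (P₁ P₂ : Matrix (Fin 3) (Fin 4) ℝ) (x y : Fin 3 → ℝ) :
    Matrix (Fin 6) (Fin 6) ℝ :=
  fun i j =>
    if hi : (i : ℕ) < 3 then
      if hj : (j : ℕ) < 4 then P₁ ⟨(i : ℕ), hi⟩ ⟨(j : ℕ), hj⟩
      else if (j : ℕ) = 4 then x ⟨(i : ℕ), hi⟩ else 0
    else
      if hj : (j : ℕ) < 4 then P₂ ⟨(i : ℕ) - 3, by have := i.isLt; omega⟩ ⟨(j : ℕ), hj⟩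
      else if (j : ℕ) = 4 then 0
      else y ⟨(i : ℕ) - 3, by have := i.isLt; omega⟩

/-- `psi P₁ P₂` is the unique 3×3 matrix `F` such that for all `x y : ℝ³`,
`xᵀ F y = det [P₁ | x | 0; P₂ | 0 | y]`.  (Since the determinant is bilinear in `(x, y)`,
this matrix is obtained by evaluating at pairs of standard basis vectors.) -/
noncomputable def psi (P₁ P₂ : Matrix (Fin 3) (Fin 4) ℝ) : Matrix (Fin 3) (Fin 3) ℝ :=
  fun a b => (bigMat P₁ P₂ (Pi.single a 1) (Pi.single b 1)).det

/-- A camera is a real 3×4 matrix of rank 3. -/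
def IsCamera (P : Matrix (Fin 3) (Fin 4) ℝ) : Prop := P.rank = 3

/-- `P` is a solution of the family `F` indexed by the edges `E`. -/
def IsSolutionOf (n : ℕ) (E : Fin n → Fin n → Prop)
    (F : Fin n → Fin n → Matrix (Fin 3) (Fin 3) ℝ)
    (P : Fin n → Matrix (Fin 3) (Fin 4) ℝ) : Prop :=
  (∀ i, IsCamera (P i)) ∧
    ∃ lam : Fin n → Fin n → ℝ,
      ∀ i j, E i j → lam i j ≠ 0 ∧ lam i j • F i j = psi (P i) (P j)

/-!
Since `det [P₁ | x | 0; P₂ | 0 | y] = xᵀ (psi P₁ P₂) y`, multiplying that 6×6 matrix by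
block-diagonal matrices on the right and on the left gives the two transformation laws
`psi (P₁ A) (P₂ A) = det A • psi P₁ P₂` and
`B₁ᵀ psi (B₁ P₁) (B₂ P₂) B₂ = (det B₁ det B₂) • psi P₁ P₂`.
If `G^{ij} ∝ Hᵢᵀ F^{ij} Hⱼ` and `Pᵢ` solves `F`, the second law shows that `Hᵢ⁻¹ Pᵢ` solves `G`,
and these cameras have the same centres as the `Pᵢ`. Conversely, two cameras with the same centre
differ by an invertible left factor, so projectively equivalent centres force `Qᵢ = Bᵢ Pᵢ H`, and
the two laws give `G^{ij} ∝ Bᵢ⁻ᵀ F^{ij} Bⱼ⁻¹`.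
-/

theorem Matrix.det_updateCol_sum_smul {R n ι : Type*} [CommRing R] [Fintype n] [DecidableEq n]
    (A : Matrix n n R) (j : n) (s : Finset ι) (c : ι → R) (f : ι → n → R) :
    (A.updateCol j (∑ a ∈ s, c a • f a)).det = ∑ a ∈ s, c a * (A.updateCol j (f a)).det := by
  classical
  induction s using Finset.induction_on with
  | empty => simp [det_eq_zero_of_column_eq_zero j]
  | insert a s ha ih =>
    rw [Finset.sum_insert ha, det_updateCol_add, det_updateCol_smul, ih, Finset.sum_insert ha]

def upperCol (x : Fin 3 → ℝ) : Fin 6 → ℝ :=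
  fun i => if h : (i : ℕ) < 3 then x ⟨i, h⟩ else 0

def lowerCol (y : Fin 3 → ℝ) : Fin 6 → ℝ :=
  fun i => if h : (i : ℕ) < 3 then 0 else y ⟨(i : ℕ) - 3, by have := i.isLt; omega⟩

theorem upperCol_eq_sum (x : Fin 3 → ℝ) : upperCol x = ∑ a, x a • upperCol (Pi.single a 1) := by
  ext i
  fin_cases i <;> simp [upperCol, Fin.sum_univ_three]

theorem lowerCol_eq_sum (y : Fin 3 → ℝ) : lowerCol y = ∑ b, y b • lowerCol (Pi.single b 1) := by
  ext i
  fin_cases i <;> simp [lowerCol, Fin.sum_univ_three]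

theorem bigMat_eq_updateCol (P₁ P₂ : Matrix (Fin 3) (Fin 4) ℝ) (x y : Fin 3 → ℝ) :
    bigMat P₁ P₂ x y = ((bigMat P₁ P₂ 0 0).updateCol 4 (upperCol x)).updateCol 5 (lowerCol y) := by
  ext i j
  fin_cases i <;> fin_cases j <;> simp [bigMat, upperCol, lowerCol]

theorem det_bigMat (P₁ P₂ : Matrix (Fin 3) (Fin 4) ℝ) (x y : Fin 3 → ℝ) :
    (bigMat P₁ P₂ x y).det = x ⬝ᵥ (psi P₁ P₂ *ᵥ y) := by
  have hcomm := updateCol_comm (bigMat P₁ P₂ 0 0) (show (4 : Fin 6) ≠ 5 by decide)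
  have hcol : ∀ b, (((bigMat P₁ P₂ 0 0).updateCol 4 (upperCol x)).updateCol 5
      (lowerCol (Pi.single b 1))).det = ∑ a, x a * psi P₁ P₂ a b := by
    intro b
    rw [hcomm, upperCol_eq_sum x, det_updateCol_sum_smul]
    refine Finset.sum_congr rfl fun a _ => ?_
    rw [← hcomm, ← bigMat_eq_updateCol, psi]
  rw [bigMat_eq_updateCol, lowerCol_eq_sum y, det_updateCol_sum_smul]
  simp only [hcol, dotProduct, mulVec, Finset.mul_sum]
  rw [Finset.sum_comm]
  exact Finset.sum_congr rfl fun a _ => Finset.sum_congr rfl fun b _ => by ring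

def twoCols (u v : Fin 3 → ℝ) : Matrix (Fin 3) (Fin 2) ℝ :=
  of fun i j => ![u i, v i] j

theorem mul_twoCols (B : Matrix (Fin 3) (Fin 3) ℝ) (u v : Fin 3 → ℝ) :
    B * twoCols u v = twoCols (B *ᵥ u) (B *ᵥ v) := by
  ext i j
  fin_cases j <;> simp [twoCols, mul_apply, mulVec, dotProduct]

theorem bigMat_eq_reindex_fromBlocks (P₁ P₂ : Matrix (Fin 3) (Fin 4) ℝ) (x y : Fin 3 → ℝ) :
    bigMat P₁ P₂ x y = reindex finSumFinEquiv finSumFinEquiv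
      (fromBlocks P₁ (twoCols x 0) P₂ (twoCols 0 y)) := by
  ext i j
  fin_cases i <;> fin_cases j <;> rfl

theorem bigMat_mul_right (P₁ P₂ : Matrix (Fin 3) (Fin 4) ℝ) (A : Matrix (Fin 4) (Fin 4) ℝ)
    (x y : Fin 3 → ℝ) :
    bigMat (P₁ * A) (P₂ * A) x y =
      bigMat P₁ P₂ x y * reindex finSumFinEquiv finSumFinEquiv
        (fromBlocks A 0 0 (1 : Matrix (Fin 2) (Fin 2) ℝ)) := by
  simp [bigMat_eq_reindex_fromBlocks, fromBlocks_multiply]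

theorem bigMat_mul_left (B₁ B₂ : Matrix (Fin 3) (Fin 3) ℝ) (P₁ P₂ : Matrix (Fin 3) (Fin 4) ℝ)
    (x y : Fin 3 → ℝ) :
    bigMat (B₁ * P₁) (B₂ * P₂) (B₁ *ᵥ x) (B₂ *ᵥ y) =
      reindex finSumFinEquiv finSumFinEquiv (fromBlocks B₁ 0 0 B₂) * bigMat P₁ P₂ x y := by
  simp [bigMat_eq_reindex_fromBlocks, fromBlocks_multiply, mul_twoCols]

theorem Matrix.ext_of_dotProduct_mulVec {R m n : Type*} [CommSemiring R] [Fintype m]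
    [Fintype n] [DecidableEq m] [DecidableEq n] {M N : Matrix m n R}
    (h : ∀ x y, x ⬝ᵥ (M *ᵥ y) = x ⬝ᵥ (N *ᵥ y)) : M = N :=
  (toLinearMap₂' R).injective <| LinearMap.ext₂ fun x y => by
    rw [toLinearMap₂'_apply', toLinearMap₂'_apply', h]

theorem psi_mul_right (P₁ P₂ : Matrix (Fin 3) (Fin 4) ℝ) (A : Matrix (Fin 4) (Fin 4) ℝ) :
    psi (P₁ * A) (P₂ * A) = A.det • psi P₁ P₂ :=
  ext_of_dotProduct_mulVec fun x y => by
    rw [← det_bigMat, bigMat_mul_right, det_mul, det_reindex_self, det_fromBlocks_zero₂₁, det_one,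
      mul_one, det_bigMat, smul_mulVec, dotProduct_smul, smul_eq_mul, mul_comm]

theorem transpose_mul_psi_mul (B₁ B₂ : Matrix (Fin 3) (Fin 3) ℝ)
    (P₁ P₂ : Matrix (Fin 3) (Fin 4) ℝ) :
    B₁ᵀ * psi (B₁ * P₁) (B₂ * P₂) * B₂ = (B₁.det * B₂.det) • psi P₁ P₂ :=
  ext_of_dotProduct_mulVec fun x y => by
    rw [← mulVec_mulVec, ← mulVec_mulVec, dotProduct_mulVec, vecMul_transpose, ← det_bigMat,
      bigMat_mul_left, det_mul, det_reindex_self, det_fromBlocks_zero₂₁, det_bigMat, smul_mulVec,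
      dotProduct_smul, smul_eq_mul]

theorem psi_mul_of_isUnit {B₁ B₂ : Matrix (Fin 3) (Fin 3) ℝ} (h₁ : IsUnit B₁.det)
    (h₂ : IsUnit B₂.det) (P₁ P₂ : Matrix (Fin 3) (Fin 4) ℝ) :
    psi (B₁ * P₁) (B₂ * P₂) = (B₁.det * B₂.det) • ((B₁⁻¹)ᵀ * psi P₁ P₂ * B₂⁻¹) := by
  rw [← Matrix.smul_mul, ← Matrix.mul_smul, ← transpose_mul_psi_mul, transpose_nonsing_inv,
    Matrix.mul_assoc, mul_nonsing_inv_cancel_right _ _ h₂,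
    nonsing_inv_mul_cancel_left _ _ (by rwa [det_transpose])]

theorem Matrix.ker_mulVecLin_mul_of_isUnit {R m n : Type*} [CommRing R] [Fintype m]
    [Fintype n] [DecidableEq m] {B : Matrix m m R} (hB : IsUnit B.det) (P : Matrix m n R) :
    LinearMap.ker (B * P).mulVecLin = LinearMap.ker P.mulVecLin := by
  rw [mulVecLin_mul, LinearMap.ker_comp_of_ker_eq_bot _ (LinearMap.ker_eq_bot.2
    (mulVec_injective_of_isUnit ((isUnit_iff_isUnit_det B).2 hB)))]

theorem Matrix.exists_isUnit_det_mul_eq_of_ker_eq {R m n : Type*} [CommRing R] [Fintype m]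
    [Fintype n] [DecidableEq m] {P Q : Matrix m n R} (hP : Function.Surjective P.mulVecLin)
    (hQ : Function.Surjective Q.mulVecLin)
    (hker : LinearMap.ker Q.mulVecLin = LinearMap.ker P.mulVecLin) :
    ∃ B : Matrix m m R, IsUnit B.det ∧ Q = B * P := by
  let e : (m → R) ≃ₗ[R] (m → R) :=
    (P.mulVecLin.quotKerEquivOfSurjective hP).symm ≪≫ₗ Submodule.quotEquivOfEq _ _ hker.symm ≪≫ₗ
      Q.mulVecLin.quotKerEquivOfSurjective hQ
  refine ⟨LinearMap.toMatrix' e, by rw [LinearMap.det_toMatrix']; exact e.isUnit_det', ?_⟩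
  refine mulVec_injective (funext fun x => ?_)
  have he : e (P.mulVecLin x) = Q.mulVecLin x := by
    simp only [e, LinearEquiv.trans_apply, LinearMap.quotKerEquivOfSurjective_symm_apply,
      Submodule.quotEquivOfEq_mk, LinearMap.quotKerEquivOfSurjective_apply_mk]
  rw [← mulVec_mulVec, LinearMap.toMatrix'_mulVec, LinearEquiv.coe_coe]
  exact he.symm

theorem IsCamera.surjective_mulVecLin {P : Matrix (Fin 3) (Fin 4) ℝ} (hP : IsCamera P) :
    Function.Surjective P.mulVecLin := by
  rw [← LinearMap.range_eq_top]
  refine Submodule.eq_top_of_finrank_eq ?_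
  rw [show Module.finrank ℝ (LinearMap.range P.mulVecLin) = P.rank from rfl, hP]
  simp

theorem IsCamera.isUnit_det_mul {P : Matrix (Fin 3) (Fin 4) ℝ} (hP : IsCamera P)
    {B : Matrix (Fin 3) (Fin 3) ℝ} (hB : IsUnit B.det) : IsCamera (B * P) :=
  (rank_mul_eq_right_of_isUnit_det B P hB).trans hP

theorem IsCamera.mul_isUnit_det {P : Matrix (Fin 3) (Fin 4) ℝ} (hP : IsCamera P)
    {A : Matrix (Fin 4) (Fin 4) ℝ} (hA : IsUnit A.det) : IsCamera (P * A) :=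
  (rank_mul_eq_left_of_isUnit_det A P hA).trans hP

section Solutions

variable {n : ℕ} {E : Fin n → Fin n → Prop} {F G : Fin n → Fin n → Matrix (Fin 3) (Fin 3) ℝ}
  {P Q : Fin n → Matrix (Fin 3) (Fin 4) ℝ}

theorem IsSolutionOf.nonsing_inv_mul (hP : IsSolutionOf n E F P)
    {H : Fin n → Matrix (Fin 3) (Fin 3) ℝ} {μ : Fin n → Fin n → ℝ} (hH : ∀ i, IsUnit (H i).det)
    (hG : ∀ i j, E i j → μ i j ≠ 0 ∧ G i j = μ i j • ((H i)ᵀ * F i j * H j)) :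
    IsSolutionOf n E G fun i => (H i)⁻¹ * P i := by
  obtain ⟨hcam, lam, hlam⟩ := hP
  have hHinv i : IsUnit (H i)⁻¹.det := isUnit_nonsing_inv_det _ (hH i)
  refine ⟨fun i => (hcam i).isUnit_det_mul (hHinv i),
    fun i j => ((H i).det * (H j).det * μ i j)⁻¹ * lam i j, fun i j hij => ?_⟩
  obtain ⟨hμ, hGij⟩ := hG i j hij
  obtain ⟨hlam0, hFij⟩ := hlam i j hij
  refine ⟨by simp [hμ, hlam0, (hH i).ne_zero, (hH j).ne_zero], ?_⟩
  rw [psi_mul_of_isUnit (hHinv i) (hHinv j), nonsing_inv_nonsing_inv _ (hH i),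
    nonsing_inv_nonsing_inv _ (hH j), ← hFij, hGij]
  simp only [Matrix.mul_smul, Matrix.smul_mul, smul_smul, det_nonsing_inv, Ring.inverse_eq_inv']
  congr 1
  field_simp

theorem IsSolutionOf.exists_fundamental_action (hP : IsSolutionOf n E F P)
    (hQ : IsSolutionOf n E G Q) {H : Matrix (Fin 4) (Fin 4) ℝ} (hH : IsUnit H.det)
    (hker : ∀ i, LinearMap.ker (Q i).mulVecLin =
      (LinearMap.ker (P i).mulVecLin).comap H.mulVecLin) :
    ∃ (K : Fin n → Matrix (Fin 3) (Fin 3) ℝ) (μ : Fin n → Fin n → ℝ),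
      (∀ i, (K i).det ≠ 0) ∧ ∀ i j, E i j → μ i j ≠ 0 ∧ G i j = μ i j • ((K i)ᵀ * F i j * K j) := by
  obtain ⟨hPcam, lamF, hlamF⟩ := hP
  obtain ⟨hQcam, lamG, hlamG⟩ := hQ
  have hfactor i : ∃ B : Matrix (Fin 3) (Fin 3) ℝ, IsUnit B.det ∧ Q i = B * (P i * H) :=
    exists_isUnit_det_mul_eq_of_ker_eq ((hPcam i).mul_isUnit_det hH).surjective_mulVecLin
      (hQcam i).surjective_mulVecLin (by rw [hker i, mulVecLin_mul, LinearMap.ker_comp])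
  choose B hB hQB using hfactor
  refine ⟨fun i => (B i)⁻¹, fun i j => (lamG i j)⁻¹ * ((B i).det * (B j).det * H.det * lamF i j),
    fun i => (isUnit_nonsing_inv_det _ (hB i)).ne_zero, fun i j hij => ?_⟩
  obtain ⟨hlamF0, hFij⟩ := hlamF i j hij
  obtain ⟨hlamG0, hGij⟩ := hlamG i j hij
  refine ⟨by simp [hlamF0, hlamG0, (hB i).ne_zero, (hB j).ne_zero, hH.ne_zero], ?_⟩
  rw [← inv_smul_smul₀ hlamG0 (G i j), hGij, hQB i, hQB j, psi_mul_of_isUnit (hB i) (hB j),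
    psi_mul_right, ← hFij]
  simp only [Matrix.mul_smul, Matrix.smul_mul, smul_smul]
  congr 1
  ring

end Solutions

theorem stmt5_general (n : ℕ) (E : Fin n → Fin n → Prop)
    (F G : Fin n → Fin n → Matrix (Fin 3) (Fin 3) ℝ)
    (hFc : ∃ P, IsSolutionOf n E F P) :
    (∃ (H : Fin n → Matrix (Fin 3) (Fin 3) ℝ) (lam : Fin n → Fin n → ℝ),
        (∀ i, (H i).det ≠ 0) ∧
          ∀ i j, E i j → lam i j ≠ 0 ∧ G i j = lam i j • ((H i)ᵀ * F i j * H j)) ↔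
      (∃ (P Q : Fin n → Matrix (Fin 3) (Fin 4) ℝ) (H : Matrix (Fin 4) (Fin 4) ℝ),
        IsSolutionOf n E F P ∧ IsSolutionOf n E G Q ∧ H.det ≠ 0 ∧
          ∀ i, LinearMap.ker (Q i).mulVecLin =
            (LinearMap.ker (P i).mulVecLin).comap H.mulVecLin) := by
  constructor
  · rintro ⟨H, μ, hH, hG⟩
    obtain ⟨P, hP⟩ := hFc
    refine ⟨P, _, 1, hP, hP.nonsing_inv_mul (fun i => (hH i).isUnit) hG, by simp, fun i => ?_⟩
    rw [ker_mulVecLin_mul_of_isUnit (isUnit_nonsing_inv_det _ (hH i).isUnit), mulVecLin_one,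
      Submodule.comap_id]
  · rintro ⟨P, Q, H, hP, hQ, hH, hker⟩
    exact hP.exists_fundamental_action hQ hH.isUnit hker

theorem stmt5 (n : ℕ) (E : Fin n → Fin n → Prop)
    (F G : Fin n → Fin n → Matrix (Fin 3) (Fin 3) ℝ)
    (hF : ∀ i j, E i j → (F i j).rank = 2) (hG : ∀ i j, E i j → (G i j).rank = 2)
    (hFc : ∃ P, IsSolutionOf n E F P) (hGc : ∃ Q, IsSolutionOf n E G Q) :
    (∃ (H : Fin n → Matrix (Fin 3) (Fin 3) ℝ) (lam : Fin n → Fin n → ℝ),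
        (∀ i, (H i).det ≠ 0) ∧
          ∀ i j, E i j → lam i j ≠ 0 ∧ G i j = lam i j • ((H i)ᵀ * F i j * H j)) ↔
      (∃ (P Q : Fin n → Matrix (Fin 3) (Fin 4) ℝ) (H : Matrix (Fin 4) (Fin 4) ℝ),
        IsSolutionOf n E F P ∧ IsSolutionOf n E G Q ∧ H.det ≠ 0 ∧
          ∀ i, LinearMap.ker (Q i).mulVecLin =
            (LinearMap.ker (P i).mulVecLin).comap H.mulVecLin) :=
  stmt5_general n E F G hFc
end

section
/- Let F¹² be the 3×3 matrix with rows (0,0,0), (0,1,0), (0,0,1); F¹³ the matrix with rows (0,0,0), (0,0,1), (0,1,0); and F²³ the matrix with rows (0,0,0), (0,1,1), (0,−1,1). Each of these has rank 2, the vector e = (1,0,0) satisfies F^{ij} e = 0 and (F^{ij})ᵀ e = 0 for all three matrices (so all epipoles equal (1,0,0)), and the triple-wise equations (e₁³)ᵀ F¹² e₂³ = (e₁²)ᵀ F¹³ e₃² = (e₂¹)ᵀ F²³ e₃¹ = 0 hold. Nevertheless, the triple {F¹², F¹³, F²³} is NOT compatible: there exist no cameras P₁, P₂, P₃ and nonzero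 scalars λ_{ij} with λ_{ij} F^{ij} = ψ(Pᵢ,Pⱼ) for all i < j. -/
/-!
`psi P₁ P₂` is the matrix of the bilinear form `(x, y) ↦ det [P₁ | x | 0; P₂ | 0 | y]`, and this
form vanishes at `(P₁ u, P₂ u)` for every `u ∈ ℝ⁴`, because `(u, -1, -1)` is then a kernel vector
of the 6×6 matrix. Write `aᵢ, bᵢ, cᵢ` for the rows `P₁ i, P₂ i, P₃ i` (indexed from `0`), viewed as
linear forms on `ℝ⁴`. A compatible triple would give the quadratic identities
`a₁b₁ + a₂b₂ = 0`, `a₁c₂ + a₂c₁ = 0` and `b₁(c₁ + c₂) + b₂(c₂ - c₁) = 0`. Since `P₁` is onto,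
there are `u₀, u₁` dual to `a₁, a₂`, and polarising the first two identities forces
`(b₁, b₂) = t (a₂, -a₁)` and `(c₂, c₁) = s (a₂, -a₁)`. At `u₀` the third identity then reads
`-t s = 0`, while `t, s ≠ 0` because a camera has no zero row.
-/

open Matrix

section Psi

variable (P₁ P₂ : Matrix (Fin 3) (Fin 4) ℝ)

def bigMatColX : (Fin 3 → ℝ) →ₗ[ℝ] Fin 6 → ℝ where
  toFun x i := if h : (i : ℕ) < 3 then x ⟨i, h⟩ else 0
  map_add' x x' := by ext i; by_cases h : (i : ℕ) < 3 <;> simp [h]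
  map_smul' c x := by ext i; by_cases h : (i : ℕ) < 3 <;> simp [h]

def bigMatColY : (Fin 3 → ℝ) →ₗ[ℝ] Fin 6 → ℝ where
  toFun y i := if h : (i : ℕ) < 3 then 0 else y ⟨i - 3, by omega⟩
  map_add' y y' := by ext i; by_cases h : (i : ℕ) < 3 <;> simp [h]
  map_smul' c y := by ext i; by_cases h : (i : ℕ) < 3 <;> simp [h]

lemma bigMat_eq_updateCol_four (x y : Fin 3 → ℝ) :
    bigMat P₁ P₂ x y = (bigMat P₁ P₂ 0 y).updateCol 4 (bigMatColX x) := by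
  ext i j
  by_cases hj : j = 4
  · subst hj; simp [bigMat, bigMatColX]
  · simp [bigMat, updateCol_ne hj, Fin.ext_iff] at hj ⊢
    split_ifs <;> simp_all

lemma bigMat_eq_updateCol_five (x y : Fin 3 → ℝ) :
    bigMat P₁ P₂ x y = (bigMat P₁ P₂ x 0).updateCol 5 (bigMatColY y) := by
  ext i j
  by_cases hj : j = 5
  · subst hj; simp [bigMat, bigMatColY]
  · simp [bigMat, updateCol_ne hj, Fin.ext_iff] at hj ⊢
    split_ifs <;> simp_all; omega

noncomputable def bigMatDetBilin : (Fin 3 → ℝ) →ₗ[ℝ] (Fin 3 → ℝ) →ₗ[ℝ] ℝ :=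
  LinearMap.mk₂ ℝ (fun x y => (bigMat P₁ P₂ x y).det)
    (fun x x' y => by
      rw [bigMat_eq_updateCol_four P₁ P₂ (x + x'), bigMat_eq_updateCol_four P₁ P₂ x,
        bigMat_eq_updateCol_four P₁ P₂ x', map_add, det_updateCol_add])
    (fun c x y => by
      rw [bigMat_eq_updateCol_four P₁ P₂ (c • x), bigMat_eq_updateCol_four P₁ P₂ x, map_smul,
        det_updateCol_smul, smul_eq_mul])
    (fun x y y' => by
      rw [bigMat_eq_updateCol_five P₁ P₂ x (y + y'), bigMat_eq_updateCol_five P₁ P₂ x y,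
        bigMat_eq_updateCol_five P₁ P₂ x y', map_add, det_updateCol_add])
    (fun c x y => by
      rw [bigMat_eq_updateCol_five P₁ P₂ x (c • y), bigMat_eq_updateCol_five P₁ P₂ x y, map_smul,
        det_updateCol_smul, smul_eq_mul])

lemma psi_eq_toMatrix₂' : psi P₁ P₂ = LinearMap.toMatrix₂' ℝ (bigMatDetBilin P₁ P₂) := by
  ext a b
  rw [LinearMap.toMatrix₂'_apply, bigMatDetBilin, LinearMap.mk₂_apply, psi]

lemma dotProduct_psi_mulVec (x y : Fin 3 → ℝ) :
    x ⬝ᵥ (psi P₁ P₂ *ᵥ y) = (bigMat P₁ P₂ x y).det := by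
  rw [← toLinearMap₂'_apply', psi_eq_toMatrix₂', toLinearMap₂'_toMatrix']
  rfl

lemma det_bigMat_mulVec (u : Fin 4 → ℝ) : (bigMat P₁ P₂ (P₁ *ᵥ u) (P₂ *ᵥ u)).det = 0 := by
  refine exists_mulVec_eq_zero_iff.mp ⟨fun j => if h : (j : ℕ) < 4 then u ⟨j, h⟩ else -1, ?_, ?_⟩
  · exact fun h => by simpa using congrFun h 4
  · ext i
    fin_cases i <;> simp [bigMat, mulVec, dotProduct, Fin.sum_univ_succ] <;> ring

lemma dotProduct_mulVec_psi_mulVec (u : Fin 4 → ℝ) :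
    (P₁ *ᵥ u) ⬝ᵥ (psi P₁ P₂ *ᵥ (P₂ *ᵥ u)) = 0 := by
  rw [dotProduct_psi_mulVec, det_bigMat_mulVec]

end Psi

lemma Matrix.mulVec_surjective_of_rank_eq_card {K m n : Type*} [Field K] [Fintype m] [Fintype n]
    (A : Matrix m n K) (h : A.rank = Fintype.card m) : Function.Surjective A.mulVec := by
  have : LinearMap.range A.mulVecLin = ⊤ :=
    Submodule.eq_top_of_finrank_eq (by rw [← Matrix.rank, h, Module.finrank_fintype_fun_eq_card])
  exact LinearMap.range_eq_top.mp this

lemma IsCamera.mulVec_surjective {P : Matrix (Fin 3) (Fin 4) ℝ} (hP : IsCamera P) :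
    Function.Surjective P.mulVec :=
  P.mulVec_surjective_of_rank_eq_card (hP.trans (Fintype.card_fin 3).symm)

lemma IsCamera.row_ne_zero {P : Matrix (Fin 3) (Fin 4) ℝ} (hP : IsCamera P) (i : Fin 3) :
    P i ≠ 0 := by
  intro hi
  obtain ⟨u, hu⟩ := hP.mulVec_surjective (Pi.single i 1)
  simpa [mulVec, hi] using congrFun hu i

theorem exists_eq_smul_of_dotProduct_mul_add_dotProduct_mul_eq_zero {R n : Type*} [CommRing R]
    [Fintype n] {a b c d u₀ u₁ : n → R}
    (ha₀ : a ⬝ᵥ u₀ = 1) (hb₀ : b ⬝ᵥ u₀ = 0) (ha₁ : a ⬝ᵥ u₁ = 0) (hb₁ : b ⬝ᵥ u₁ = 1)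
    (h : ∀ u, (a ⬝ᵥ u) * (c ⬝ᵥ u) + (b ⬝ᵥ u) * (d ⬝ᵥ u) = 0) :
    ∃ t : R, c = t • b ∧ d = -t • a := by
  have polar (u v : n → R) :
      (a ⬝ᵥ u) * (c ⬝ᵥ v) + (a ⬝ᵥ v) * (c ⬝ᵥ u) + (b ⬝ᵥ u) * (d ⬝ᵥ v) + (b ⬝ᵥ v) * (d ⬝ᵥ u)
        = 0 := by
    have huv := h (u + v)
    simp only [dotProduct_add] at huv
    linear_combination huv - h u - h v
  have hc₀ : c ⬝ᵥ u₀ = 0 := by simpa [ha₀, hb₀] using h u₀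
  have hd₁ : d ⬝ᵥ u₁ = 0 := by simpa [ha₁, hb₁] using h u₁
  have hc : c = -(d ⬝ᵥ u₀) • b := dotProduct_eq _ _ fun u => by
    have := polar u u₀
    rw [ha₀, hb₀, hc₀] at this
    rw [smul_dotProduct, smul_eq_mul]
    linear_combination this
  refine ⟨-(d ⬝ᵥ u₀), hc, dotProduct_eq _ _ fun u => ?_⟩
  have := polar u u₁
  rw [ha₁, hb₁, hd₁, hc, smul_dotProduct, hb₁] at this
  rw [smul_dotProduct, smul_eq_mul]
  linear_combination this

lemma dotProduct_mulVec_mulVec_eq_zero_of_smul_eq_psi {P Q : Matrix (Fin 3) (Fin 4) ℝ}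
    {F : Matrix (Fin 3) (Fin 3) ℝ} {l : ℝ} (hl : l ≠ 0) (h : l • F = psi P Q) (u : Fin 4 → ℝ) :
    (P *ᵥ u) ⬝ᵥ (F *ᵥ (Q *ᵥ u)) = 0 := by
  have := dotProduct_mulVec_psi_mulVec P Q u
  rwa [← h, smul_mulVec, dotProduct_smul, smul_eq_mul, mul_eq_zero, or_iff_right hl] at this

def F₁₂ : Matrix (Fin 3) (Fin 3) ℝ := !![0, 0, 0; 0, 1, 0; 0, 0, 1]

def F₁₃ : Matrix (Fin 3) (Fin 3) ℝ := !![0, 0, 0; 0, 0, 1; 0, 1, 0]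

def F₂₃ : Matrix (Fin 3) (Fin 3) ℝ := !![0, 0, 0; 0, 1, 1; 0, -1, 1]

lemma rank_diagonal_mul_eq_two {G : Matrix (Fin 3) (Fin 3) ℝ} (hG : G.det ≠ 0) :
    (diagonal ![0, 1, 1] * G).rank = 2 := by
  rw [rank_mul_eq_left_of_isUnit_det _ _ hG.isUnit, rank_diagonal, Fintype.card_subtype]
  simp [Fin.univ_succ, Finset.filter_insert, Finset.filter_singleton]

lemma rank_F₁₂ : F₁₂.rank = 2 := by
  have : F₁₂ = diagonal ![0, 1, 1] * 1 := by ext i j; fin_cases i <;> fin_cases j <;> simp [F₁₂]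
  rw [this, rank_diagonal_mul_eq_two (by simp)]

lemma rank_F₁₃ : F₁₃.rank = 2 := by
  have : F₁₃ = diagonal ![0, 1, 1] * !![1, 0, 0; 0, 0, 1; 0, 1, 0] := by
    ext i j; fin_cases i <;> fin_cases j <;> simp [F₁₃]
  rw [this, rank_diagonal_mul_eq_two (by simp [det_fin_three])]

lemma rank_F₂₃ : F₂₃.rank = 2 := by
  have : F₂₃ = diagonal ![0, 1, 1] * !![1, 0, 0; 0, 1, 1; 0, -1, 1] := by
    ext i j; fin_cases i <;> fin_cases j <;> simp [F₂₃]
  rw [this, rank_diagonal_mul_eq_two (by simp [det_fin_three])]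

lemma dotProduct_F₁₂_mulVec (x y : Fin 3 → ℝ) : x ⬝ᵥ (F₁₂ *ᵥ y) = x 1 * y 1 + x 2 * y 2 := by
  simp [F₁₂, mulVec, dotProduct, Fin.sum_univ_succ]

lemma dotProduct_F₁₃_mulVec (x y : Fin 3 → ℝ) : x ⬝ᵥ (F₁₃ *ᵥ y) = x 1 * y 2 + x 2 * y 1 := by
  simp [F₁₃, mulVec, dotProduct, Fin.sum_univ_succ]

lemma dotProduct_F₂₃_mulVec (x y : Fin 3 → ℝ) :
    x ⬝ᵥ (F₂₃ *ᵥ y) = x 1 * (y 1 + y 2) + x 2 * (-y 1 + y 2) := by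
  simp [F₂₃, mulVec, dotProduct, Fin.sum_univ_succ]

theorem not_compatible_F₁₂_F₁₃_F₂₃ : ¬ ∃ (P₁ P₂ P₃ : Matrix (Fin 3) (Fin 4) ℝ) (l₁₂ l₁₃ l₂₃ : ℝ),
    IsCamera P₁ ∧ IsCamera P₂ ∧ IsCamera P₃ ∧ l₁₂ ≠ 0 ∧ l₁₃ ≠ 0 ∧ l₂₃ ≠ 0 ∧
    l₁₂ • F₁₂ = psi P₁ P₂ ∧ l₁₃ • F₁₃ = psi P₁ P₃ ∧ l₂₃ • F₂₃ = psi P₂ P₃ := by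
  rintro ⟨P₁, P₂, P₃, l₁₂, l₁₃, l₂₃, hP₁, hP₂, hP₃, hl₁₂, hl₁₃, hl₂₃, h₁₂, h₁₃, h₂₃⟩
  have q₁₂ (u : Fin 4 → ℝ) : P₁ 1 ⬝ᵥ u * (P₂ 1 ⬝ᵥ u) + P₁ 2 ⬝ᵥ u * (P₂ 2 ⬝ᵥ u) = 0 := by
    have := dotProduct_mulVec_mulVec_eq_zero_of_smul_eq_psi hl₁₂ h₁₂ u
    rwa [dotProduct_F₁₂_mulVec] at this
  have q₁₃ (u : Fin 4 → ℝ) : P₁ 1 ⬝ᵥ u * (P₃ 2 ⬝ᵥ u) + P₁ 2 ⬝ᵥ u * (P₃ 1 ⬝ᵥ u) = 0 := by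
    have := dotProduct_mulVec_mulVec_eq_zero_of_smul_eq_psi hl₁₃ h₁₃ u
    rwa [dotProduct_F₁₃_mulVec] at this
  have q₂₃ (u : Fin 4 → ℝ) :
      P₂ 1 ⬝ᵥ u * (P₃ 1 ⬝ᵥ u + P₃ 2 ⬝ᵥ u) + P₂ 2 ⬝ᵥ u * (-(P₃ 1 ⬝ᵥ u) + P₃ 2 ⬝ᵥ u) = 0 := by
    have := dotProduct_mulVec_mulVec_eq_zero_of_smul_eq_psi hl₂₃ h₂₃ u
    rwa [dotProduct_F₂₃_mulVec] at this
  obtain ⟨u₀, hu₀⟩ := hP₁.mulVec_surjective ![0, 1, 0]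
  obtain ⟨u₁, hu₁⟩ := hP₁.mulVec_surjective ![0, 0, 1]
  have ha₁u₀ : P₁ 1 ⬝ᵥ u₀ = 1 := congrFun hu₀ 1
  have ha₂u₀ : P₁ 2 ⬝ᵥ u₀ = 0 := congrFun hu₀ 2
  have ha₁u₁ : P₁ 1 ⬝ᵥ u₁ = 0 := congrFun hu₁ 1
  have ha₂u₁ : P₁ 2 ⬝ᵥ u₁ = 1 := congrFun hu₁ 2
  obtain ⟨t, hb₁, hb₂⟩ :=
    exists_eq_smul_of_dotProduct_mul_add_dotProduct_mul_eq_zero ha₁u₀ ha₂u₀ ha₁u₁ ha₂u₁ q₁₂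
  obtain ⟨s, hc₂, hc₁⟩ :=
    exists_eq_smul_of_dotProduct_mul_add_dotProduct_mul_eq_zero ha₁u₀ ha₂u₀ ha₁u₁ ha₂u₁ q₁₃
  have ht : t ≠ 0 := by rintro rfl; exact hP₂.row_ne_zero 1 (by simpa using hb₁)
  have hs : s ≠ 0 := by rintro rfl; exact hP₃.row_ne_zero 2 (by simpa using hc₂)
  have h₀ := q₂₃ u₀
  rw [hb₁, hb₂, hc₁, hc₂] at h₀
  simp [smul_dotProduct, ha₁u₀, ha₂u₀, ht, hs] at h₀

/-- Example `ex:counterexample1`: a triple of rank-2 matrices whose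
epipoles all equal `(1,0,0)` and which satisfy the triple-wise equations, yet which is
not compatible. -/
theorem stmt10 :
    let F12 : Matrix (Fin 3) (Fin 3) ℝ := !![0, 0, 0; 0, 1, 0; 0, 0, 1]
    let F13 : Matrix (Fin 3) (Fin 3) ℝ := !![0, 0, 0; 0, 0, 1; 0, 1, 0]
    let F23 : Matrix (Fin 3) (Fin 3) ℝ := !![0, 0, 0; 0, 1, 1; 0, -1, 1]
    let e : Fin 3 → ℝ := ![1, 0, 0]
    F12.rank = 2 ∧ F13.rank = 2 ∧ F23.rank = 2 ∧
    (F12 *ᵥ e = 0 ∧ F12ᵀ *ᵥ e = 0) ∧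
    (F13 *ᵥ e = 0 ∧ F13ᵀ *ᵥ e = 0) ∧
    (F23 *ᵥ e = 0 ∧ F23ᵀ *ᵥ e = 0) ∧
    (e ⬝ᵥ (F12 *ᵥ e) = 0 ∧ e ⬝ᵥ (F13 *ᵥ e) = 0 ∧ e ⬝ᵥ (F23 *ᵥ e) = 0) ∧
    ¬ ∃ (P₁ P₂ P₃ : Matrix (Fin 3) (Fin 4) ℝ) (l12 l13 l23 : ℝ),
        IsCamera P₁ ∧ IsCamera P₂ ∧ IsCamera P₃ ∧
        l12 ≠ 0 ∧ l13 ≠ 0 ∧ l23 ≠ 0 ∧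
        l12 • F12 = psi P₁ P₂ ∧ l13 • F13 = psi P₁ P₃ ∧ l23 • F23 = psi P₂ P₃ := by
  refine ⟨rank_F₁₂, rank_F₁₃, rank_F₂₃, ?_, ?_, ?_, ?_, not_compatible_F₁₂_F₁₃_F₂₃⟩ <;>
    simp [mulVec_transpose, mulVec, dotProduct, Fin.sum_univ_succ, funext_iff, Fin.forall_fin_succ]
end

section
/- Let 𝒢 = (V,E) be a graph on the vertex set {1,…,n} and let {F^{ij} : (ij) ∈ E} be a family of fundamental matrices, extended by F^{ji} := (F^{ij})ᵀ. Then {F^{ij}} is compatible if and only if there exist H₁,…,Hₙ ∈ GL₃(ℝ) and nonzero scalars λ_{ij} = λ_{ji} such that the matrices G^{ij} := λ_{ij} Hᵢᵀ F^{ij} Hⱼ satisfy the cycle condition: for every closed walk i₀, i₁, …, i_k = i₀ in 𝒢 (each consecutive pair an edge), G^{i₀i₁} + G^{i₁i₂} + ⋯ + G^{i_{k−1}i_k} = 0. In particular, any family of rank-2 real 3×3 matrices {G^{ij} : (ij) ∈ E} with G^{ji} = (G^{ij})ᵀ satisfying this cycle condition is compatible, i.e., there exist cameras P₁,…,Pₙ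 and nonzero scalars μ_{ij} with μ_{ij} G^{ij} = ψ(Pᵢ,Pⱼ) for every edge. -/
/-!
Choose one change of coordinates `T` of `ℝ⁴` moving every camera centre off the plane at
infinity; then every camera factors as `Pᵢ = Hᵢ [I | cᵢ] T` with `Hᵢ` invertible, and
`ψ(Pᵢ, Pⱼ) = det T · det Hᵢ · det Hⱼ · Hᵢ⁻ᵀ [cⱼ - cᵢ]ₓ Hⱼ⁻¹`, where `[v]ₓ` is the matrix of
`w ↦ v × w`. Hence a family is compatible exactly when, after rescaling and the congruences
`X ↦ Hᵢᵀ X Hⱼ`, it becomes the family of differences `[cⱼ]ₓ - [cᵢ]ₓ` of a potential. A family on a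
graph is the difference family of a potential iff its sums along closed walks vanish, and closed
walks of length two make each `Gⁱʲ` skew-symmetric, i.e. a cross-product matrix.
-/

open Matrix

/-- The family `G` satisfies the cycle condition on the graph `E`: the sum of the
matrices along every closed walk vanishes. -/
def CycleCond (n : ℕ) (E : Fin n → Fin n → Prop)
    (G : Fin n → Fin n → Matrix (Fin 3) (Fin 3) ℝ) : Prop :=
  ∀ (k : ℕ) (v : ℕ → Fin n), v k = v 0 → (∀ m, m < k → E (v m) (v (m + 1))) →
    ∑ m ∈ Finset.range k, G (v m) (v (m + 1)) = 0

/-- The family `F` indexed by the edges of `E` is compatible. -/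
def CompatibleOnGraph (n : ℕ) (E : Fin n → Fin n → Prop)
    (F : Fin n → Fin n → Matrix (Fin 3) (Fin 3) ℝ) : Prop :=
  ∃ (P : Fin n → Matrix (Fin 3) (Fin 4) ℝ) (lam : Fin n → Fin n → ℝ),
    (∀ i, IsCamera (P i)) ∧
      ∀ i j, E i j → lam i j ≠ 0 ∧ lam i j • F i j = psi (P i) (P j)

namespace SimpleGraph.Walk

variable {V M : Type*} [AddCommGroup M] {G : SimpleGraph V} (g : V → V → M)

def sumAlong : ∀ {u v : V}, G.Walk u v → M
  | _, _, nil => 0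
  | u, _, cons (v := w) _ p => g u w + p.sumAlong

@[simp] lemma sumAlong_nil {u : V} : (nil : G.Walk u u).sumAlong g = 0 := rfl

@[simp] lemma sumAlong_cons {u v w : V} (h : G.Adj u v) (p : G.Walk v w) :
    (cons h p).sumAlong g = g u v + p.sumAlong g := rfl

lemma sumAlong_append {u v w : V} (p : G.Walk u v) (q : G.Walk v w) :
    (p.append q).sumAlong g = p.sumAlong g + q.sumAlong g := by
  induction p with
  | nil => simp
  | cons h p ih => simp [ih, add_assoc]

lemma sumAlong_reverse (hg : ∀ u v, G.Adj u v → g v u = -g u v) {u v : V} (p : G.Walk u v) :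
    p.reverse.sumAlong g = -p.sumAlong g := by
  induction p with
  | nil => simp
  | cons h p ih => simp [sumAlong_append, ih, hg _ _ h, add_comm]

lemma sumAlong_eq_sum_getVert {u v : V} (p : G.Walk u v) :
    p.sumAlong g = ∑ m ∈ Finset.range p.length, g (p.getVert m) (p.getVert (m + 1)) := by
  induction p with
  | nil => simp
  | cons h p ih =>
    rw [length_cons, Finset.sum_range_succ']
    simp only [getVert_cons_succ, getVert_zero, zero_add, sumAlong_cons, ih]
    exact add_comm _ _

end SimpleGraph.Walk

theorem SimpleGraph.exists_potential_of_sumAlong_eq_zero {V M : Type*} [AddCommGroup M]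
    {G : SimpleGraph V} (g : V → V → M) (hg : ∀ u (p : G.Walk u u), p.sumAlong g = 0) :
    ∃ c : V → M, ∀ u v, G.Adj u v → g u v = c v - c u := by
  have hskew (u v : V) (h : G.Adj u v) : g v u = -g u v := by
    simpa [eq_neg_iff_add_eq_zero, add_comm] using hg _ (.cons h (.cons h.symm .nil))
  have hunique {u v : V} (p q : G.Walk u v) : p.sumAlong g = q.sumAlong g := by
    have := hg _ (p.append q.reverse)
    rwa [Walk.sumAlong_append, Walk.sumAlong_reverse g hskew, ← sub_eq_add_neg, sub_eq_zero]
      at this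
  choose root hroot using fun C : G.ConnectedComponent => Quot.exists_rep C
  have hwalk (u : V) : Nonempty (G.Walk (root (G.connectedComponentMk u)) u) :=
    ConnectedComponent.exact (hroot _)
  refine ⟨fun u => (hwalk u).some.sumAlong g, fun u v h => ?_⟩
  have hextend {r r' : V} (p : G.Walk r u) (q : G.Walk r' v) (hr : r = r') :
      q.sumAlong g = p.sumAlong g + g u v := by
    subst hr
    simpa [Walk.sumAlong_append] using hunique q (p.append (.cons h .nil))
  have hroot_eq : root (G.connectedComponentMk u) = root (G.connectedComponentMk v) := by
    rw [ConnectedComponent.connectedComponentMk_eq_of_adj h]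
  dsimp only
  rw [hextend (hwalk u).some (hwalk v).some hroot_eq, add_sub_cancel_left]

open SimpleGraph in
theorem exists_potential_of_sum_closedWalk_eq_zero {V M : Type*} [AddCommGroup M]
    {E : V → V → Prop} (hE : ∀ i j, E i j → E j i) (g : V → V → M)
    (hg : ∀ (k : ℕ) (v : ℕ → V), v k = v 0 → (∀ m, m < k → E (v m) (v (m + 1))) →
      ∑ m ∈ Finset.range k, g (v m) (v (m + 1)) = 0) :
    ∃ c : V → M, ∀ i j, E i j → g i j = c j - c i := by
  have hadj {i j : V} (h : (fromRel E).Adj i j) : E i j := by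
    rcases ((fromRel_adj _ _ _).mp h).2 with h | h
    exacts [h, hE _ _ h]
  obtain ⟨c, hc⟩ := exists_potential_of_sumAlong_eq_zero (G := fromRel E) g fun u p => by
    rw [p.sumAlong_eq_sum_getVert]
    exact hg _ _ (by simp) fun m hm => hadj (p.adj_getVert_succ hm)
  refine ⟨c, fun i j hij => ?_⟩
  obtain rfl | hne := eq_or_ne i j
  · simpa using hg 1 (fun _ => i) rfl (by simpa using hij)
  exact hc i j ((fromRel_adj _ _ _).mpr ⟨hne, .inl hij⟩)

namespace Matrix

lemma exists_dotProduct_ne_zero {ι K m : Type*} [Finite ι] [Field K] [Infinite K] [Fintype m]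
    (v : ι → m → K) (hv : ∀ i, v i ≠ 0) : ∃ r : m → K, ∀ i, r ⬝ᵥ v i ≠ 0 := by
  by_contra! h
  obtain ⟨i, hi⟩ := Subspace.exists_eq_top_of_iUnion_eq_univ
    (p := fun i => LinearMap.ker (dotProductBilin K K (v i))) <| by
      refine Set.eq_univ_of_forall fun r => ?_
      obtain ⟨i, hi⟩ := h r
      exact Set.mem_iUnion.mpr ⟨i, by simpa [dotProduct_comm] using hi⟩
  refine hv i (dotProduct_eq_zero _ fun w => ?_)
  simpa using (LinearMap.ext_iff.mp (LinearMap.ker_eq_top.mp hi)) w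

lemma exists_mulVec_eq_zero_of_card_lt {m n K : Type*} [Fintype m] [Fintype n] [Field K]
    (A : Matrix m n K) (h : Fintype.card m < Fintype.card n) : ∃ v ≠ 0, A *ᵥ v = 0 := by
  obtain ⟨v, hv, hv0⟩ := (Submodule.ne_bot_iff _).mp (LinearMap.ker_ne_bot_of_finrank_lt
    (f := A.mulVecLin) (by simpa using h))
  exact ⟨v, hv0, hv⟩

lemma isUnit_det_of_rank_mul_eq {m n K : Type*} [Fintype m] [DecidableEq m] [Fintype n] [Field K]
    {A : Matrix m m K} {B : Matrix m n K} (h : (A * B).rank = Fintype.card m) : IsUnit A.det := by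
  have hA : A.rank = Fintype.card m :=
    le_antisymm (rank_le_card_height A) (h ▸ rank_mul_le_left A B)
  have hrange : LinearMap.range A.mulVecLin = ⊤ :=
    Submodule.eq_top_of_finrank_eq (by rw [← rank, hA, Module.finrank_fintype_fun_eq_card])
  rw [← isUnit_iff_isUnit_det, ← mulVec_surjective_iff_isUnit]
  exact LinearMap.range_eq_top.mp hrange

lemma det_updateRow_one {n R : Type*} [Fintype n] [DecidableEq n] [CommRing R] (j : n)
    (r : n → R) : (updateRow 1 j r).det = r j := by
  have hr : ∑ k, r k • (1 : Matrix n n R) k = r := by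
    ext l
    simp [Finset.sum_apply, one_apply]
  simpa [hr] using det_updateRow_sum (1 : Matrix n n R) j r

lemma transpose_mul_mul_apply {m R : Type*} [Fintype m] [DecidableEq m] [CommRing R]
    (M X N : Matrix m m R) (p q : m) :
    (Mᵀ * X * N) p q = (M *ᵥ Pi.single p 1) ⬝ᵥ X *ᵥ (N *ᵥ Pi.single q 1) := by
  rw [mulVec_single_one, mulVec_single_one]
  simp only [mul_apply, dotProduct, mulVec, col_apply, transpose_apply, Finset.mul_sum,
    Finset.sum_mul, mul_assoc]
  exact Finset.sum_comm

lemma inv_transpose_mul_transpose_mul_mul_mul_inv {m R : Type*} [Fintype m] [DecidableEq m]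
    [CommRing R] {A B : Matrix m m R} (hA : IsUnit A.det) (hB : IsUnit B.det) (X : Matrix m m R) :
    (A⁻¹)ᵀ * (Aᵀ * X * B) * B⁻¹ = X := by
  have hAt : IsUnit Aᵀ.det := by rwa [det_transpose]
  simp [transpose_nonsing_inv, Matrix.mul_assoc, mul_nonsing_inv _ hB,
    nonsing_inv_mul_cancel_left _ _ hAt]

lemma transpose_mul_inv_transpose_mul_mul_inv_mul {m R : Type*} [Fintype m] [DecidableEq m]
    [CommRing R] {A B : Matrix m m R} (hA : IsUnit A.det) (hB : IsUnit B.det) (X : Matrix m m R) :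
    Aᵀ * ((A⁻¹)ᵀ * X * B⁻¹) * B = X := by
  have hAt : IsUnit Aᵀ.det := by rwa [det_transpose]
  simp [transpose_nonsing_inv, Matrix.mul_assoc, nonsing_inv_mul _ hB,
    mul_nonsing_inv_cancel_left _ _ hAt]

end Matrix

section CrossMatrix

variable {R : Type*} [CommRing R]

def crossMatrix (v : Fin 3 → R) : Matrix (Fin 3) (Fin 3) R :=
  LinearMap.toMatrix' (crossProduct v)

lemma crossMatrix_mulVec (v w : Fin 3 → R) : crossMatrix v *ᵥ w = v ⨯₃ w :=
  LinearMap.toMatrix'_mulVec _ _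

lemma crossMatrix_sub (v w : Fin 3 → R) :
    crossMatrix (v - w) = crossMatrix v - crossMatrix w := by
  simp [crossMatrix]

lemma transpose_crossMatrix (v : Fin 3 → R) : (crossMatrix v)ᵀ = crossMatrix (-v) := by
  ext i j
  fin_cases i <;> fin_cases j <;> simp [crossMatrix, cross_apply]

def skewVec (M : Matrix (Fin 3) (Fin 3) R) : Fin 3 → R := ![M 2 1, M 0 2, M 1 0]

lemma skewVec_sub (M N : Matrix (Fin 3) (Fin 3) R) :
    skewVec (M - N) = skewVec M - skewVec N := by
  ext i
  fin_cases i <;> rfl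

lemma crossMatrix_skewVec [IsAddTorsionFree R] {M : Matrix (Fin 3) (Fin 3) R} (hM : Mᵀ = -M) :
    crossMatrix (skewVec M) = M := by
  have h (i j : Fin 3) : M j i = -M i j := congrFun (congrFun hM i) j
  have hdiag (i : Fin 3) : M i i = 0 := self_eq_neg.mp (h i i)
  ext i j
  fin_cases i <;> fin_cases j <;> simp [crossMatrix, skewVec, cross_apply, hdiag]
  all_goals exact neg_eq_iff_eq_neg.mpr (h _ _)

end CrossMatrix

def normalizedCamera (c : Fin 3 → ℝ) : Matrix (Fin 3) (Fin 4) ℝ :=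
  !![1, 0, 0, c 0; 0, 1, 0, c 1; 0, 0, 1, c 2]

lemma rank_normalizedCamera (c : Fin 3 → ℝ) : (normalizedCamera c).rank = 3 := by
  set J : Matrix (Fin 4) (Fin 3) ℝ := (1 : Matrix (Fin 4) (Fin 4) ℝ).submatrix id Fin.castSucc
  have hJ : normalizedCamera c * J = 1 := by
    ext i j
    fin_cases i <;> fin_cases j <;> simp [J, normalizedCamera, mul_apply, one_apply]
  refine le_antisymm (by simpa using rank_le_card_height (normalizedCamera c)) ?_
  simpa [hJ] using rank_mul_le_left (normalizedCamera c) J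

lemma eq_mul_normalizedCamera_of_mulVec_eq_zero (P : Matrix (Fin 3) (Fin 4) ℝ) {v : Fin 4 → ℝ}
    (hv : P *ᵥ v = 0) (hv3 : v 3 ≠ 0) :
    P = P.submatrix id Fin.castSucc * normalizedCamera (-(v 3)⁻¹ • Fin.init v) := by
  ext i j
  have hi : ∑ k, P i k * v k = 0 := congrFun hv i
  rw [Fin.sum_univ_four] at hi
  fin_cases j <;> simp [normalizedCamera, mul_apply, Fin.sum_univ_three, Fin.init]
  field_simp
  linear_combination hi

lemma exists_eq_mul_normalizedCamera_mul {ι : Type*} [Finite ι]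
    (P : ι → Matrix (Fin 3) (Fin 4) ℝ) (hP : ∀ i, (P i).rank = 3) :
    ∃ (T : Matrix (Fin 4) (Fin 4) ℝ) (A : ι → Matrix (Fin 3) (Fin 3) ℝ) (c : ι → Fin 3 → ℝ),
      IsUnit T.det ∧ (∀ i, IsUnit (A i).det) ∧ ∀ i, P i = A i * normalizedCamera (c i) * T := by
  choose v hv0 hv using fun i => exists_mulVec_eq_zero_of_card_lt (P i) (by simp)
  -- `r` vanishes neither on `e₃` nor on any camera centre `v i`, so `T := updateRow 1 3 r` is
  -- invertible and moves every centre off the plane `x₃ = 0`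
  obtain ⟨r, hr⟩ := exists_dotProduct_ne_zero (Option.elim' (Pi.single 3 1) v)
    (by rintro (_ | i) <;> simp [hv0])
  set T : Matrix (Fin 4) (Fin 4) ℝ := updateRow 1 3 r
  have hT : IsUnit T.det := by simpa [T, det_updateRow_one] using hr none
  have hnormal (i : ι) : ∃ (A : Matrix (Fin 3) (Fin 3) ℝ) (c : Fin 3 → ℝ),
      IsUnit A.det ∧ P i * T⁻¹ = A * normalizedCamera c := by
    have hker : (P i * T⁻¹) *ᵥ (T *ᵥ v i) = 0 := by
      rw [mulVec_mulVec, Matrix.mul_assoc, nonsing_inv_mul _ hT, Matrix.mul_one, hv]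
    have h3 : (T *ᵥ v i) 3 ≠ 0 := by simpa [T, mulVec, updateRow_self] using hr (some i)
    have hQ := eq_mul_normalizedCamera_of_mulVec_eq_zero _ hker h3
    have hrank : (P i * T⁻¹).rank = Fintype.card (Fin 3) := by
      rw [rank_mul_eq_left_of_isUnit_det _ _ (isUnit_nonsing_inv_det T hT), hP, Fintype.card_fin]
    rw [hQ] at hrank
    exact ⟨_, _, isUnit_det_of_rank_mul_eq hrank, hQ⟩
  choose A c hA hQ using hnormal
  refine ⟨T, A, c, hT, hA, fun i => ?_⟩
  rw [← hQ, Matrix.mul_assoc, nonsing_inv_mul _ hT, Matrix.mul_one]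

lemma bigMat_eq_submatrix_fromBlocks (P Q : Matrix (Fin 3) (Fin 4) ℝ) (x y : Fin 3 → ℝ) :
    bigMat P Q x y =
      (fromBlocks P (of fun i => ![x i, 0]) Q (of fun i => ![0, y i])).submatrix
        (finSumFinEquiv (m := 3) (n := 3)).symm (finSumFinEquiv (m := 4) (n := 2)).symm := by
  ext i j
  fin_cases i <;> fin_cases j <;> rfl

lemma bigMat_normalizedCamera_eq_submatrix_fromBlocks (a b x y : Fin 3 → ℝ) :
    bigMat (normalizedCamera a) (normalizedCamera b) x y =
      (fromBlocks 1 (of fun i => ![a i, x i, 0]) 1 (of fun i => ![b i, 0, y i])).submatrix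
        (finSumFinEquiv (m := 3) (n := 3)).symm (finSumFinEquiv (m := 3) (n := 3)).symm := by
  ext i j
  fin_cases i <;> fin_cases j <;> rfl

lemma det_bigMat_normalizedCamera (a b x y : Fin 3 → ℝ) :
    (bigMat (normalizedCamera a) (normalizedCamera b) x y).det =
      x ⬝ᵥ crossMatrix (b - a) *ᵥ y := by
  rw [bigMat_normalizedCamera_eq_submatrix_fromBlocks, det_submatrix_equiv_self,
    det_fromBlocks_one₁₁, one_mul, crossMatrix_mulVec, det_fin_three]
  simp [cross_apply, dotProduct, Fin.sum_univ_three]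
  ring

lemma det_bigMat_mul_left (A B : Matrix (Fin 3) (Fin 3) ℝ) (P Q : Matrix (Fin 3) (Fin 4) ℝ)
    (x y : Fin 3 → ℝ) :
    (bigMat (A * P) (B * Q) (A *ᵥ x) (B *ᵥ y)).det = A.det * B.det * (bigMat P Q x y).det := by
  have h : bigMat (A * P) (B * Q) (A *ᵥ x) (B *ᵥ y) =
      (fromBlocks A 0 0 B).submatrix (finSumFinEquiv (m := 3) (n := 3)).symm
        (finSumFinEquiv (m := 3) (n := 3)).symm * bigMat P Q x y := by
    rw [bigMat_eq_submatrix_fromBlocks, bigMat_eq_submatrix_fromBlocks, submatrix_mul_equiv,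
      fromBlocks_multiply]
    congr 2 <;> ext i j <;> fin_cases j <;> simp [mul_apply, mulVec, dotProduct]
  rw [h, det_mul, det_submatrix_equiv_self, det_fromBlocks_zero₂₁]

lemma psi_mul_right_s19 (P Q : Matrix (Fin 3) (Fin 4) ℝ) (U : Matrix (Fin 4) (Fin 4) ℝ) :
    psi (P * U) (Q * U) = U.det • psi P Q := by
  ext p q
  have h : bigMat (P * U) (Q * U) (Pi.single p 1) (Pi.single q 1) =
      bigMat P Q (Pi.single p 1) (Pi.single q 1) *
        (fromBlocks U 0 0 (1 : Matrix (Fin 2) (Fin 2) ℝ)).submatrix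
          (finSumFinEquiv (m := 4) (n := 2)).symm (finSumFinEquiv (m := 4) (n := 2)).symm := by
    simp [bigMat_eq_submatrix_fromBlocks, submatrix_mul_equiv, fromBlocks_multiply]
  simp [psi, h, mul_comm]

lemma psi_mul_normalizedCamera {A B : Matrix (Fin 3) (Fin 3) ℝ} (hA : IsUnit A.det)
    (hB : IsUnit B.det) (a b : Fin 3 → ℝ) :
    psi (A * normalizedCamera a) (B * normalizedCamera b) =
      (A.det * B.det) • ((A⁻¹)ᵀ * crossMatrix (b - a) * B⁻¹) := by
  ext p q
  have hp : Pi.single p 1 = A *ᵥ (A⁻¹ *ᵥ Pi.single p 1) := by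
    rw [mulVec_mulVec, mul_nonsing_inv A hA, one_mulVec]
  have hq : Pi.single q 1 = B *ᵥ (B⁻¹ *ᵥ Pi.single q 1) := by
    rw [mulVec_mulVec, mul_nonsing_inv B hB, one_mulVec]
  rw [psi, hp, hq, det_bigMat_mul_left, det_bigMat_normalizedCamera, Matrix.smul_apply,
    transpose_mul_mul_apply, smul_eq_mul]

section Compatibility

variable {n : ℕ} {E : Fin n → Fin n → Prop}

lemma compatibleOnGraph_of_eq_crossMatrix {F : Fin n → Fin n → Matrix (Fin 3) (Fin 3) ℝ}
    {H : Fin n → Matrix (Fin 3) (Fin 3) ℝ} (hH : ∀ i, (H i).det ≠ 0)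
    {lam : Fin n → Fin n → ℝ} (hlam : ∀ i j, E i j → lam i j ≠ 0) {c : Fin n → Fin 3 → ℝ}
    (h : ∀ i j, E i j → lam i j • ((H i)ᵀ * F i j * H j) = crossMatrix (c j - c i)) :
    CompatibleOnGraph n E F := by
  refine ⟨fun i => H i * normalizedCamera (c i), fun i j => (H i).det * (H j).det * lam i j,
    fun i => ?_, fun i j hij => ⟨by simp [hH, hlam i j hij], ?_⟩⟩
  · rw [IsCamera, rank_mul_eq_right_of_isUnit_det _ _ (hH i).isUnit, rank_normalizedCamera]
  · rw [psi_mul_normalizedCamera (hH i).isUnit (hH j).isUnit, ← h i j hij, mul_smul,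
      Matrix.mul_smul, Matrix.smul_mul,
      inv_transpose_mul_transpose_mul_mul_mul_inv (hH i).isUnit (hH j).isUnit]

lemma exists_eq_crossMatrix_of_compatibleOnGraph (hE : ∀ i j, E i j → E j i)
    {F : Fin n → Fin n → Matrix (Fin 3) (Fin 3) ℝ} (hFsym : ∀ i j, F j i = (F i j)ᵀ)
    (hF : ∀ i j, E i j → F i j ≠ 0) (hc : CompatibleOnGraph n E F) :
    ∃ (H : Fin n → Matrix (Fin 3) (Fin 3) ℝ) (lam : Fin n → Fin n → ℝ) (c : Fin n → Fin 3 → ℝ),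
      (∀ i, (H i).det ≠ 0) ∧ (∀ i j, lam i j = lam j i) ∧ (∀ i j, E i j → lam i j ≠ 0) ∧
      ∀ i j, E i j → lam i j • ((H i)ᵀ * F i j * H j) = crossMatrix (c j - c i) := by
  classical
  obtain ⟨P, μ, hP, hμ⟩ := hc
  obtain ⟨T, A, c, hT, hA, hPA⟩ := exists_eq_mul_normalizedCamera_mul P hP
  set κ : Fin n → Fin n → ℝ := fun i j => T.det * ((A i).det * (A j).det)
  have hκ (i j : Fin n) : κ i j ≠ 0 := by simp [κ, hT.ne_zero, (hA i).ne_zero, (hA j).ne_zero]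
  have key (i j : Fin n) (hij : E i j) :
      (μ i j / κ i j) • ((A i)ᵀ * F i j * A j) = crossMatrix (c j - c i) := by
    have h := (hμ i j hij).2
    rw [hPA i, hPA j, psi_mul_right_s19, psi_mul_normalizedCamera (hA i) (hA j), smul_smul] at h
    change μ i j • F i j = κ i j • _ at h
    calc (μ i j / κ i j) • ((A i)ᵀ * F i j * A j)
        = (κ i j)⁻¹ • ((A i)ᵀ * (μ i j • F i j) * A j) := by
          rw [Matrix.mul_smul, Matrix.smul_mul, smul_smul, div_eq_inv_mul]
      _ = crossMatrix (c j - c i) := by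
          rw [h, Matrix.mul_smul, Matrix.smul_mul, smul_smul, inv_mul_cancel₀ (hκ i j), one_smul,
            transpose_mul_inv_transpose_mul_mul_inv_mul (hA i) (hA j)]
  have hsymm (i j : Fin n) (hij : E i j) : μ i j / κ i j = μ j i / κ j i := by
    have hX : (A i)ᵀ * F i j * A j ≠ 0 := fun h0 => hF i j hij <| by
      simpa [h0] using (inv_transpose_mul_transpose_mul_mul_mul_inv (hA i) (hA j) (F i j)).symm
    have hji := congrArg transpose (key j i (hE i j hij))
    rw [transpose_smul, transpose_mul, transpose_mul, transpose_transpose, ← hFsym,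
      ← Matrix.mul_assoc, transpose_crossMatrix, neg_sub] at hji
    exact smul_left_injective ℝ hX ((key i j hij).trans hji.symm)
  refine ⟨A, fun i j => if E i j then μ i j / κ i j else 1, c, fun i => (hA i).ne_zero,
    fun i j => ?_, fun i j hij => ?_, fun i j hij => ?_⟩
  · by_cases hij : E i j
    · simp [hij, hE i j hij, hsymm i j hij]
    · have hji : ¬E j i := fun h => hij (hE j i h)
      simp [hij, hji]
  · simp [hij, (hμ i j hij).1, hκ]
  · simpa [hij] using key i j hij

lemma cycleCond_of_eq_sub {G : Fin n → Fin n → Matrix (Fin 3) (Fin 3) ℝ}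
    (C : Fin n → Matrix (Fin 3) (Fin 3) ℝ) (h : ∀ i j, E i j → G i j = C j - C i) :
    CycleCond n E G := by
  intro k v hv hwalk
  rw [Finset.sum_congr rfl fun m hm => h _ _ (hwalk m (Finset.mem_range.mp hm)),
    Finset.sum_range_sub (fun m => C (v m)), hv, sub_self]

lemma exists_eq_crossMatrix_of_cycleCond (hE : ∀ i j, E i j → E j i)
    {G : Fin n → Fin n → Matrix (Fin 3) (Fin 3) ℝ} (hG : ∀ i j, G j i = (G i j)ᵀ)
    (hcyc : CycleCond n E G) :
    ∃ c : Fin n → Fin 3 → ℝ, ∀ i j, E i j → G i j = crossMatrix (c j - c i) := by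
  obtain ⟨C, hC⟩ := exists_potential_of_sum_closedWalk_eq_zero hE G hcyc
  refine ⟨fun i => skewVec (C i), fun i j hij => ?_⟩
  have hskew : (G i j)ᵀ = -G i j := by rw [← hG, hC i j hij, hC j i (hE i j hij), neg_sub]
  rw [← skewVec_sub, ← hC i j hij, crossMatrix_skewVec hskew]

end Compatibility

theorem stmt19_general (n : ℕ) (E : Fin n → Fin n → Prop)
    (hEsym : ∀ i j, E i j → E j i)
    (F : Fin n → Fin n → Matrix (Fin 3) (Fin 3) ℝ)
    (hFsym : ∀ i j, F j i = (F i j)ᵀ)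
    (hFrank : ∀ i j, E i j → (F i j).rank = 2) :
    (CompatibleOnGraph n E F ↔
        ∃ (H : Fin n → Matrix (Fin 3) (Fin 3) ℝ) (lam : Fin n → Fin n → ℝ),
          (∀ i, (H i).det ≠ 0) ∧ (∀ i j, lam i j = lam j i) ∧
          (∀ i j, E i j → lam i j ≠ 0) ∧
          CycleCond n E (fun i j => lam i j • ((H i)ᵀ * F i j * H j))) ∧
      (∀ G : Fin n → Fin n → Matrix (Fin 3) (Fin 3) ℝ,
        (∀ i j, G j i = (G i j)ᵀ) → (∀ i j, E i j → (G i j).rank = 2) →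
        CycleCond n E G → CompatibleOnGraph n E G) := by
  have hF : ∀ i j, E i j → F i j ≠ 0 := fun i j hij h0 => by simpa [h0] using hFrank i j hij
  refine ⟨⟨fun hc => ?_, fun ⟨H, lam, hH, hlam_symm, hlam, hcyc⟩ => ?_⟩, fun G hG _ hcyc => ?_⟩
  · obtain ⟨H, lam, c, hH, hlam_symm, hlam, h⟩ :=
      exists_eq_crossMatrix_of_compatibleOnGraph hEsym hFsym hF hc
    refine ⟨H, lam, hH, hlam_symm, hlam, cycleCond_of_eq_sub (fun i => crossMatrix (c i)) ?_⟩
    intro i j hij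
    rw [h i j hij, crossMatrix_sub]
  · have hsymm (i j : Fin n) :
        lam j i • ((H j)ᵀ * F j i * H i) = (lam i j • ((H i)ᵀ * F i j * H j))ᵀ := by
      simp [hFsym i j, hlam_symm i j, Matrix.mul_assoc]
    obtain ⟨c, hc⟩ := exists_eq_crossMatrix_of_cycleCond hEsym hsymm hcyc
    exact compatibleOnGraph_of_eq_crossMatrix hH hlam hc
  · obtain ⟨c, hc⟩ := exists_eq_crossMatrix_of_cycleCond hEsym hG hcyc
    exact compatibleOnGraph_of_eq_crossMatrix (H := fun _ => 1) (lam := fun _ _ => 1)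
      (by simp) (by simp) (by simpa using hc)

/-- the cycle theorem. -/
theorem stmt19 (n : ℕ) (E : Fin n → Fin n → Prop)
    (hEsym : ∀ i j, E i j → E j i) (hEirr : ∀ i, ¬ E i i)
    (F : Fin n → Fin n → Matrix (Fin 3) (Fin 3) ℝ)
    (hFsym : ∀ i j, F j i = (F i j)ᵀ)
    (hFrank : ∀ i j, E i j → (F i j).rank = 2) :
    (CompatibleOnGraph n E F ↔
        ∃ (H : Fin n → Matrix (Fin 3) (Fin 3) ℝ) (lam : Fin n → Fin n → ℝ),
          (∀ i, (H i).det ≠ 0) ∧ (∀ i j, lam i j = lam j i) ∧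
          (∀ i j, E i j → lam i j ≠ 0) ∧
          CycleCond n E (fun i j => lam i j • ((H i)ᵀ * F i j * H j))) ∧
      (∀ G : Fin n → Fin n → Matrix (Fin 3) (Fin 3) ℝ,
        (∀ i j, G j i = (G i j)ᵀ) → (∀ i j, E i j → (G i j).rank = 2) →
        CycleCond n E G → CompatibleOnGraph n E G) :=
  stmt19_general n E hEsym F hFsym hFrank
end
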